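/- arXiv:1008.0836 — 2 statements merged into one kernel-verified Lean document; each statement's English description precedes it below -/
import Mathlib

section
/- Let σ, r, K > 0 and x* ∈ ℝ. Define w : ℝ → ℝ by w(x) = (rK/σ²)(exp(√2·(x−x*)) − 1) for x ≤ x* and w(x) = (rK/σ²)((x−x*)² + √2·(x−x*)) for x ≥ x*. Then w is continuously differentiable on ℝ, w(x*) = 0, w tends to −rK/σ² as x → −∞, and w satisfies (σ²/2)·w''(x) = rK + σ²·w(x) for all x < x* and (σ²/2)·w''(x) = rK for all x > x*. -/
open Real Filter

/-! Both pieces are smooth, vanish at `x*` and have the same slope `√2 · rK/σ²` there, so the glued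
function has a continuous derivative. Away from `x*` its second derivative is that of the active
piece, and the two equations come down to `(√2)² = 2`. -/

section Gluing

variable {f g : ℝ → ℝ} {a x : ℝ}

theorem if_le_eventuallyEq_left (hx : x < a) :
    (fun x => if x ≤ a then f x else g x) =ᶠ[nhds x] f :=
  eventually_of_mem (Iio_mem_nhds hx) fun _ hy => if_pos (le_of_lt hy)

theorem if_le_eventuallyEq_right (hx : a < x) :
    (fun x => if x ≤ a then f x else g x) =ᶠ[nhds x] g :=
  eventually_of_mem (Ioi_mem_nhds hx) fun _ hy => if_neg (not_le.mpr hy)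

theorem hasDerivAt_if_le (hf : Differentiable ℝ f) (hg : Differentiable ℝ g) (h₀ : f a = g a)
    (h₁ : deriv f a = deriv g a) (x : ℝ) :
    HasDerivAt (fun x => if x ≤ a then f x else g x)
      (if x ≤ a then deriv f x else deriv g x) x := by
  rcases lt_trichotomy x a with hx | rfl | hx
  · rw [if_pos hx.le]
    exact (hf x).hasDerivAt.congr_of_eventuallyEq (if_le_eventuallyEq_left hx)
  · have hleft :
        HasDerivWithinAt (fun y => if y ≤ x then f y else g y) (deriv f x) (Set.Iic x) x :=
      (hf x).hasDerivAt.hasDerivWithinAt.congr (fun y hy => if_pos hy) (if_pos le_rfl)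
    have hright :
        HasDerivWithinAt (fun y => if y ≤ x then f y else g y) (deriv f x) (Set.Ici x) x := by
      refine h₁ ▸ (hg x).hasDerivAt.hasDerivWithinAt.congr (fun y hy => ?_) (by simp [h₀])
      rcases (Set.mem_Ici.mp hy).eq_or_lt with rfl | hlt
      · simp [h₀]
      · exact if_neg hlt.not_ge
    have := hleft.union hright
    rw [Set.Iic_union_Ici, hasDerivWithinAt_univ] at this
    simpa using this
  · rw [if_neg hx.not_ge]
    exact (hg x).hasDerivAt.congr_of_eventuallyEq (if_le_eventuallyEq_right hx)

theorem ContDiff.if_le_of_deriv_eq (hf : ContDiff ℝ 1 f) (hg : ContDiff ℝ 1 g) (h₀ : f a = g a)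
    (h₁ : deriv f a = deriv g a) : ContDiff ℝ 1 fun x => if x ≤ a then f x else g x := by
  have hderiv :=
    hasDerivAt_if_le (hf.differentiable one_ne_zero) (hg.differentiable one_ne_zero) h₀ h₁
  refine contDiff_one_iff_deriv.mpr ⟨fun x => (hderiv x).differentiableAt, ?_⟩
  rw [funext fun x => (hderiv x).deriv]
  exact Continuous.if_le (hf.continuous_deriv le_rfl) (hg.continuous_deriv le_rfl) continuous_id
    continuous_const fun x hx => hx ▸ h₁

theorem deriv_deriv_if_le_of_lt (hx : x < a) :
    deriv (deriv fun x => if x ≤ a then f x else g x) x = deriv (deriv f) x :=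
  (if_le_eventuallyEq_left hx).deriv.deriv_eq

theorem deriv_deriv_if_le_of_gt (hx : a < x) :
    deriv (deriv fun x => if x ≤ a then f x else g x) x = deriv (deriv g) x :=
  (if_le_eventuallyEq_right hx).deriv.deriv_eq

end Gluing

section Pieces

variable (c k a : ℝ)

theorem deriv_exp_piece :
    deriv (fun x => c * (exp (k * (x - a)) - 1)) = fun x => c * k * exp (k * (x - a)) := by
  ext x
  have := ((((hasDerivAt_id x).sub_const a).const_mul k).exp.sub_const 1).const_mul c
  simpa [mul_comm, mul_left_comm, mul_assoc] using this.deriv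

theorem deriv_deriv_exp_piece (x : ℝ) :
    deriv (deriv fun x => c * (exp (k * (x - a)) - 1)) x = c * k ^ 2 * exp (k * (x - a)) := by
  have := ((((hasDerivAt_id x).sub_const a).const_mul k).exp).const_mul (c * k)
  rw [deriv_exp_piece]
  simpa [mul_comm, mul_left_comm, mul_assoc, sq] using this.deriv

theorem deriv_quadratic_piece :
    deriv (fun x => c * ((x - a) ^ 2 + k * (x - a))) = fun x => c * (2 * (x - a) + k) := by
  ext x
  have := ((((hasDerivAt_id x).sub_const a).pow 2).add
    (((hasDerivAt_id x).sub_const a).const_mul k)).const_mul c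
  simpa using this.deriv

theorem deriv_deriv_quadratic_piece (x : ℝ) :
    deriv (deriv fun x => c * ((x - a) ^ 2 + k * (x - a))) x = 2 * c := by
  rw [deriv_quadratic_piece]
  simp [mul_comm]

theorem tendsto_exp_piece_atBot (hk : 0 < k) :
    Tendsto (fun x => c * (exp (k * (x - a)) - 1)) atBot (nhds (-c)) := by
  have hlin : Tendsto (fun x => k * (x - a)) atBot atBot :=
    (tendsto_atBot_add_const_right atBot (-a) tendsto_id).const_mul_atBot hk
  simpa using ((tendsto_exp_atBot.comp hlin).sub_const 1).const_mul c

end Pieces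

theorem put_inner_correction_general (σ r K xstar : ℝ) (hσ : 0 < σ)
    (w : ℝ → ℝ)
    (hw : ∀ x : ℝ, w x =
      if x ≤ xstar then (r * K / σ ^ 2) * (Real.exp (Real.sqrt 2 * (x - xstar)) - 1)
      else (r * K / σ ^ 2) * ((x - xstar) ^ 2 + Real.sqrt 2 * (x - xstar))) :
    ContDiff ℝ 1 w ∧
    w xstar = 0 ∧
    Tendsto w atBot (nhds (-(r * K / σ ^ 2))) ∧
    (∀ x < xstar, σ ^ 2 / 2 * deriv (deriv w) x = r * K + σ ^ 2 * w x) ∧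
    (∀ x > xstar, σ ^ 2 / 2 * deriv (deriv w) x = r * K) := by
  have hc : σ ^ 2 * (r * K / σ ^ 2) = r * K := mul_div_cancel₀ _ (by positivity)
  set c := r * K / σ ^ 2
  have hsqrt : √2 ^ 2 = 2 := sq_sqrt zero_le_two
  obtain rfl : w = _ := funext hw
  refine ⟨?_, by simp, ?_, fun x hx => ?_, fun x hx => ?_⟩
  · refine ContDiff.if_le_of_deriv_eq (by fun_prop) (by fun_prop) (by simp) ?_
    rw [deriv_exp_piece, deriv_quadratic_piece]
    simp
  · refine (tendsto_exp_piece_atBot c √2 xstar (by positivity)).congr' ?_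
    exact eventually_of_mem (Iic_mem_atBot xstar) fun x hx => (if_pos hx).symm
  · rw [deriv_deriv_if_le_of_lt hx, deriv_deriv_exp_piece, hsqrt]
    simp only [if_pos hx.le]
    linear_combination hc
  · rw [deriv_deriv_if_le_of_gt hx, deriv_deriv_quadratic_piece]
    linear_combination hc

theorem put_inner_correction (σ r K xstar : ℝ) (hσ : 0 < σ) (hr : 0 < r) (hK : 0 < K)
    (w : ℝ → ℝ)
    (hw : ∀ x : ℝ, w x =
      if x ≤ xstar then (r * K / σ ^ 2) * (Real.exp (Real.sqrt 2 * (x - xstar)) - 1)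
      else (r * K / σ ^ 2) * ((x - xstar) ^ 2 + Real.sqrt 2 * (x - xstar))) :
    ContDiff ℝ 1 w ∧
    w xstar = 0 ∧
    Tendsto w atBot (nhds (-(r * K / σ ^ 2))) ∧
    (∀ x < xstar, σ ^ 2 / 2 * deriv (deriv w) x = r * K + σ ^ 2 * w x) ∧
    (∀ x > xstar, σ ^ 2 / 2 * deriv (deriv w) x = r * K) :=
  put_inner_correction_general σ r K xstar hσ w hw
end

section
/- Let α₁, α₂ > 0, K > 0, and let B* ∈ ℝ with 0 < B* < α₁. Consider the function v₁ defined on [x*, ∞) (with x* < 0 to be determined) by v₁(x) = α₁Kx + aK·cosh(√2 x) + bK·sinh(√2 x) for x* ≤ x ≤ 0 and v₁(x) = −α₂Kx + aK·exp(−√2 x) for x ≥ 0, for constants a, b. Assume: (i) v₁ is C¹ at x = 0; (ii) v₁(x*) = α₁Kx* and, with the normalization, v₁'(x*) = B*. Then given the three conditions α₁ + √2 b = −α₂ − √2 a, α₁x* + a cosh(√2 x*) + b sinh(√2 x*) = α₁ x*, and α₁ + √2(a sinh(√2 x*) + b cosh(√2 x*)) = B*, it follows that x* = −(1/√2)·log((α₁+α₂)/(α₁−B*)).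 In particular x* < 0. -/
theorem butterfly_inner_crossing (α₁ α₂ K Bstar a b xstar : ℝ)
    (hα₁ : 0 < α₁) (hα₂ : 0 < α₂) (hK : 0 < K)
    (hB0 : 0 < Bstar) (hB1 : Bstar < α₁)
    (eq1 : α₁ + Real.sqrt 2 * b = -α₂ - Real.sqrt 2 * a)
    (eq2 : α₁ * xstar + a * Real.cosh (Real.sqrt 2 * xstar)
      + b * Real.sinh (Real.sqrt 2 * xstar) = α₁ * xstar)
    (eq3 : α₁ + Real.sqrt 2 * (a * Real.sinh (Real.sqrt 2 * xstar)
      + b * Real.cosh (Real.sqrt 2 * xstar)) = Bstar) :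
    xstar = -(1 / Real.sqrt 2) * Real.log ((α₁ + α₂) / (α₁ - Bstar)) ∧ xstar < 0 := by
  have hs : (0:ℝ) < Real.sqrt 2 := Real.sqrt_pos.mpr (by norm_num)
  set u := Real.sqrt 2 * xstar with hu
  have h2 : a * Real.cosh u + b * Real.sinh u = 0 := by linarith
  have h3 : Real.sqrt 2 * (a * Real.sinh u + b * Real.cosh u) = Bstar - α₁ := by linarith
  have h1 : Real.sqrt 2 * (a + b) = -(α₁ + α₂) := by linarith
  have hexp : Real.exp u = Real.cosh u + Real.sinh u := (Real.cosh_add_sinh u).symm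
  have key : -(α₁ + α₂) * Real.exp u = Bstar - α₁ := by
    rw [hexp, ← h1]
    nlinarith [h2, h3]
  have hden : (0:ℝ) < α₁ + α₂ := by linarith
  have hnum : (0:ℝ) < α₁ - Bstar := by linarith
  have hexp2 : Real.exp u = (α₁ - Bstar) / (α₁ + α₂) := by
    field_simp
    nlinarith [key]
  have hupos : u = Real.log ((α₁ - Bstar) / (α₁ + α₂)) := by
    rw [← Real.log_exp u, hexp2]
  have hloginv : Real.log ((α₁ + α₂) / (α₁ - Bstar)) =
      - Real.log ((α₁ - Bstar) / (α₁ + α₂)) := by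
    rw [← Real.log_inv]
    congr 1
    field_simp
  have hx : xstar = u / Real.sqrt 2 := by
    field_simp [hu, mul_comm]
    rw [hu]; ring
  constructor
  · rw [hx, hupos, hloginv]
    field_simp
  · rw [hx]
    apply div_neg_of_neg_of_pos _ hs
    rw [hupos]
    apply Real.log_neg (by positivity)
    rw [div_lt_one hden]
    linarith
end
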